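/- arXiv:1807.01552 — 6 statements merged into one kernel-verified Lean document; each statement's English description precedes it below -/
import Mathlib

section
/- Let $A$ be a unital complex Banach algebra, $p(\lambda)=\prod_{i=1}^n(\lambda-\lambda_i)$ with distinct roots, and $a_0, a_1 \in E_p(A) = \{a : p(a) = 0\}$. If $\|a_1 - a_0\|$ is sufficiently small (depending on $a_0$ and the $\lambda_i$), then there exists an invertible $s \in A$ with $a_1 = s^{-1} a_0 s$, and moreover $s = e^c$ for some $c \in A$. -/
open Polynomial Lagrange Filter Topology

/-!
If `p(a) = 0` for `p = ∏ (X - λᵢ)` with distinct roots, a polynomial identity that holds at the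
nodes `λᵢ` also holds at `a`. Applied to the Lagrange basis `Lᵢ` this makes `eᵢ(a) = Lᵢ(a)` a
partition of unity by idempotents with `a eᵢ(a) = eᵢ(a) a = λᵢ eᵢ(a)`. For two such elements,
`u = ∑ eᵢ(a₀) eᵢ(a₁)` then satisfies `a₀ u = u a₁`; it depends continuously on `a₁` and equals `1`
at `a₁ = a₀`. Since `exp` is a local diffeomorphism at `0`, `u = exp c` for `a₁` close to `a₀`.
-/

namespace Lagrange

variable {F ι A : Type*} [Field F] {s : Finset ι} {v : ι → F} [Ring A] [Algebra F A] {a : A}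

theorem nodal_dvd_of_eval_eq_zero (hvs : Set.InjOn v s) {q : F[X]}
    (hq : ∀ i ∈ s, q.eval (v i) = 0) : nodal s v ∣ q :=
  Finset.prod_dvd_of_coprime
    (fun _ hi _ hj hij => isCoprime_X_sub_C_of_isUnit_sub (sub_ne_zero.2 (hvs.ne hi hj hij)).isUnit)
    fun i hi => dvd_iff_isRoot.2 (hq i hi)

theorem aeval_eq_of_eval_eq (hvs : Set.InjOn v s) (ha : aeval a (nodal s v) = 0)
    {q r : F[X]} (hqr : ∀ i ∈ s, q.eval (v i) = r.eval (v i)) : aeval a q = aeval a r := by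
  obtain ⟨t, ht⟩ := nodal_dvd_of_eval_eq_zero hvs (q := q - r) fun i hi => by
    rw [eval_sub, hqr i hi, sub_self]
  rw [← sub_eq_zero, ← map_sub, ht, map_mul, ha, zero_mul]

variable [DecidableEq ι]

theorem aeval_basis_mul_self (hvs : Set.InjOn v s) (ha : aeval a (nodal s v) = 0) {i : ι}
    (hi : i ∈ s) :
    aeval a (Lagrange.basis s v i) * aeval a (Lagrange.basis s v i) =
      aeval a (Lagrange.basis s v i) := by
  rw [← map_mul]
  refine aeval_eq_of_eval_eq hvs ha fun j hj => ?_
  rcases eq_or_ne i j with rfl | hij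
  · rw [eval_mul, eval_basis_self hvs hi, one_mul]
  · rw [eval_mul, eval_basis_of_ne hij hj, zero_mul]

theorem mul_aeval_basis (hvs : Set.InjOn v s) (ha : aeval a (nodal s v) = 0) (i : ι) :
    a * aeval a (Lagrange.basis s v i) = v i • aeval a (Lagrange.basis s v i) := by
  have h := aeval_eq_of_eval_eq hvs ha (q := X * Lagrange.basis s v i)
    (r := C (v i) * Lagrange.basis s v i) fun j hj => by
      rcases eq_or_ne i j with rfl | hij
      · rw [eval_mul, eval_mul, eval_X, eval_C]
      · rw [eval_mul, eval_mul, eval_basis_of_ne hij hj, mul_zero, mul_zero]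
  rwa [map_mul, map_mul, aeval_X, aeval_C, ← Algebra.smul_def] at h

theorem aeval_basis_mul (hvs : Set.InjOn v s) (ha : aeval a (nodal s v) = 0) (i : ι) :
    aeval a (Lagrange.basis s v i) * a = v i • aeval a (Lagrange.basis s v i) := by
  rw [← mul_aeval_basis hvs ha i]
  simpa using ((commute_X (Lagrange.basis s v i)).map (aeval a)).symm.eq

theorem sum_aeval_basis (hvs : Set.InjOn v s) (ha : aeval a (nodal s v) = 0) :
    ∑ i ∈ s, aeval a (Lagrange.basis s v i) = 1 := by
  rw [← map_sum, ← map_one (aeval (R := F) a)]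
  refine aeval_eq_of_eval_eq hvs ha fun j hj => ?_
  rw [eval_finsetSum, Finset.sum_eq_single_of_mem j hj fun i _ hij => eval_basis_of_ne hij hj,
    eval_basis_self hvs hj, eval_one]

variable (s v) in
noncomputable def intertwiner (a b : A) : A :=
  ∑ i ∈ s, aeval a (Lagrange.basis s v i) * aeval b (Lagrange.basis s v i)

theorem mul_intertwiner (hvs : Set.InjOn v s) {b : A} (ha : aeval a (nodal s v) = 0)
    (hb : aeval b (nodal s v) = 0) :
    a * intertwiner s v a b = intertwiner s v a b * b := by
  simp only [intertwiner, Finset.mul_sum, Finset.sum_mul, ← mul_assoc,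
    mul_aeval_basis hvs ha, mul_assoc _ _ b, aeval_basis_mul hvs hb, smul_mul_assoc, mul_smul_comm]

theorem intertwiner_self (hvs : Set.InjOn v s) (ha : aeval a (nodal s v) = 0) :
    intertwiner s v a a = 1 := by
  rw [intertwiner, ← sum_aeval_basis hvs ha]
  exact Finset.sum_congr rfl fun i hi => aeval_basis_mul_self hvs ha hi

theorem continuous_intertwiner [TopologicalSpace A] [IsTopologicalRing A] (a : A) :
    Continuous (intertwiner s v a) :=
  continuous_finsetSum _ fun i _ => continuous_const.mul (Lagrange.basis s v i).continuous_aeval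

end Lagrange

section Exponential

variable {𝔸 : Type*} [NormedRing 𝔸]

theorem eventually_nhds_one_exists_exp_eq (𝕂 : Type*) [RCLike 𝕂] [NormedAlgebra 𝕂 𝔸]
    [CompleteSpace 𝔸] : ∀ᶠ u in 𝓝 (1 : 𝔸), ∃ c : 𝔸, NormedSpace.exp c = u := by
  have hexp : HasStrictFDerivAt NormedSpace.exp (ContinuousLinearEquiv.refl 𝕂 𝔸 : 𝔸 →L[𝕂] 𝔸) 0 :=
    hasStrictFDerivAt_exp_zero
  have h := hexp.map_nhds_eq_of_equiv
  rw [NormedSpace.exp_zero] at h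
  rw [← h]
  exact eventually_map.2 (.of_forall fun c => ⟨c, rfl⟩)

theorem exp_neg_mul_mul_exp_eq_of_mul_exp_eq [NormedAlgebra ℚ 𝔸] [CompleteSpace 𝔸] {a b c : 𝔸}
    (h : a * NormedSpace.exp c = NormedSpace.exp c * b) :
    NormedSpace.exp (-c) * a * NormedSpace.exp c = b := by
  rw [mul_assoc, h, ← mul_assoc, ← NormedSpace.exp_add_of_commute (Commute.refl c).neg_left,
    neg_add_cancel, NormedSpace.exp_zero, one_mul]

end Exponential

theorem stmt7_general {A : Type*} [NormedRing A] [NormedAlgebra ℂ A] [CompleteSpace A]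
    (n : ℕ) (l : Fin n → ℂ) (hl : Function.Injective l)
    (Ep : Set A) (hEp : Ep = {a : A | aeval a (∏ i : Fin n, (X - C (l i))) = 0})
    (a₀ : A) (ha₀ : a₀ ∈ Ep) :
    ∃ δ > 0, ∀ a₁ ∈ Ep, ‖a₁ - a₀‖ < δ →
      ∃ c : A, a₁ = NormedSpace.exp (-c) * a₀ * NormedSpace.exp c := by
  let : NormedAlgebra ℚ A := .restrictScalars ℚ ℂ A
  have hvs : Set.InjOn l (Finset.univ : Finset (Fin n)) := hl.injOn
  rw [← nodal_eq] at hEp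
  subst hEp
  have hT : Tendsto (intertwiner (Finset.univ : Finset (Fin n)) l a₀) (𝓝 a₀) (𝓝 1) := by
    simpa only [intertwiner_self hvs ha₀] using
      (continuous_intertwiner (s := .univ) (v := l) a₀).tendsto a₀
  obtain ⟨δ, hδ, hexp⟩ := Metric.eventually_nhds_iff.1 (hT.eventually
    (eventually_nhds_one_exists_exp_eq ℂ))
  refine ⟨δ, hδ, fun a₁ ha₁ hdist => ?_⟩
  obtain ⟨c, hc⟩ := hexp (by rwa [dist_eq_norm])
  refine ⟨c, (exp_neg_mul_mul_exp_eq_of_mul_exp_eq ?_).symm⟩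
  rw [hc]
  exact mul_intertwiner hvs ha₀ ha₁

/-- Two elements of `E_p(A)` that are close enough are similar via an
exponential: `a₁ = e^{-c} a₀ e^{c}`. -/
theorem stmt7 {A : Type*} [NormedRing A] [NormedAlgebra ℂ A] [CompleteSpace A] [NormOneClass A]
    (n : ℕ) (hn : 2 ≤ n) (l : Fin n → ℂ) (hl : Function.Injective l)
    (Ep : Set A) (hEp : Ep = {a : A | aeval a (∏ i : Fin n, (X - C (l i))) = 0})
    (a₀ : A) (ha₀ : a₀ ∈ Ep) :
    ∃ δ > 0, ∀ a₁ ∈ Ep, ‖a₁ - a₀‖ < δ →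
      ∃ c : A, a₁ = NormedSpace.exp (-c) * a₀ * NormedSpace.exp c :=
  stmt7_general n l hl Ep hEp a₀ ha₀
end

section
/- Let $A$ be a unital complex Banach algebra, $p$ a polynomial with distinct roots $\lambda_1,\dots,\lambda_n$, and $C$ a connected component of $E_p(A) = \{a : p(a)=0\}$. Then $C$ is a relatively open subset of $E_p(A)$, and any two elements $a_0, a_1 \in C$ are similar: there exist $m \geq 1$ and $c_1,\dots,c_m \in A$ with $a_1 = e^{-c_m}\cdots e^{-c_1} a_0 e^{c_1}\cdots e^{c_m}$. -/
/-!
Fix `a` with `p(a) = 0` and let `Lᵢ` be the Lagrange basis for the roots `λᵢ`. Since `p` has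
simple roots, a polynomial vanishing at every `λᵢ` kills `a`; hence `a Lᵢ(a) = λᵢ Lᵢ(a)` and
`Σ Lᵢ(a)² = 1`. For another root `b` of `p`, `T(b) = Σ Lᵢ(a) Lᵢ(b)` therefore satisfies
`a T(b) = T(b) b` and `T(a) = 1`. As `exp` is a local diffeomorphism at `0`, `T(b) = e^c` for `b`
near `a`, so `b = e^{-c} a e^c`. The path `t ↦ e^{-tc} a e^{tc}` stays in `E_p(A)`, which makes
components relatively open, and the local similarity propagates along a connected component.
-/

open Polynomial Filter Topology NormedSpace

section Lagrange

variable {K A ι : Type*} [Field K] [Ring A] [Algebra K A] [Fintype ι] {l : ι → K} {a b : A}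

theorem aeval_eq_zero_of_forall_eval_eq_zero (hl : Function.Injective l)
    (ha : aeval a (∏ i, (X - C (l i))) = 0) {q : K[X]} (hq : ∀ i, q.eval (l i) = 0) :
    aeval a q = 0 := by
  obtain ⟨r, rfl⟩ : ∏ i, (X - C (l i)) ∣ q :=
    Finset.prod_dvd_of_coprime ((pairwise_coprime_X_sub_C hl).set_pairwise _)
      fun i _ => dvd_iff_isRoot.2 (hq i)
  rw [map_mul, ha, zero_mul]

variable [DecidableEq ι]

theorem eval_X_sub_C_mul_basis_eq_zero (i j : ι) :
    ((X - C (l i)) * Lagrange.basis Finset.univ l i).eval (l j) = 0 := by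
  rcases eq_or_ne i j with rfl | hij
  · simp
  · simp [Lagrange.eval_basis_of_ne hij (Finset.mem_univ j)]

theorem mul_aeval_basis (hl : Function.Injective l) (ha : aeval a (∏ i, (X - C (l i))) = 0)
    (i : ι) :
    a * aeval a (Lagrange.basis Finset.univ l i) =
      l i • aeval a (Lagrange.basis Finset.univ l i) := by
  have h := aeval_eq_zero_of_forall_eval_eq_zero hl ha (eval_X_sub_C_mul_basis_eq_zero i)
  rwa [map_mul, map_sub, aeval_X, aeval_C, sub_mul, sub_eq_zero, ← Algebra.smul_def] at h

theorem aeval_basis_mul (hl : Function.Injective l) (ha : aeval a (∏ i, (X - C (l i))) = 0)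
    (i : ι) :
    aeval a (Lagrange.basis Finset.univ l i) * a =
      l i • aeval a (Lagrange.basis Finset.univ l i) := by
  have h := aeval_eq_zero_of_forall_eval_eq_zero hl ha
    (q := Lagrange.basis Finset.univ l i * (X - C (l i)))
    (by simpa only [mul_comm] using eval_X_sub_C_mul_basis_eq_zero i)
  rwa [map_mul, map_sub, aeval_X, aeval_C, mul_sub, sub_eq_zero, ← Algebra.commutes,
    ← Algebra.smul_def] at h

theorem sum_aeval_basis_mul_self (hl : Function.Injective l)
    (ha : aeval a (∏ i, (X - C (l i))) = 0) :
    ∑ i, aeval a (Lagrange.basis Finset.univ l i) * aeval a (Lagrange.basis Finset.univ l i) =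
      1 := by
  have h := aeval_eq_zero_of_forall_eval_eq_zero hl ha
    (q := ∑ i, Lagrange.basis Finset.univ l i * Lagrange.basis Finset.univ l i - 1) fun j => by
      rw [eval_sub, eval_one, eval_finsetSum, Finset.sum_eq_single j, eval_mul,
        Lagrange.eval_basis_self hl.injOn (Finset.mem_univ j), mul_one, sub_self]
      · exact fun i _ hij => by
          rw [eval_mul, Lagrange.eval_basis_of_ne hij (Finset.mem_univ j), zero_mul]
      · exact fun h => absurd (Finset.mem_univ j) h
  rw [map_sub, map_one, map_sum, sub_eq_zero] at h
  simpa only [map_mul] using h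

noncomputable def lagrangeIntertwiner (l : ι → K) (a b : A) : A :=
  ∑ i, aeval a (Lagrange.basis Finset.univ l i) * aeval b (Lagrange.basis Finset.univ l i)

theorem lagrangeIntertwiner_self (hl : Function.Injective l)
    (ha : aeval a (∏ i, (X - C (l i))) = 0) : lagrangeIntertwiner l a a = 1 :=
  sum_aeval_basis_mul_self hl ha

theorem mul_lagrangeIntertwiner (hl : Function.Injective l)
    (ha : aeval a (∏ i, (X - C (l i))) = 0) (hb : aeval b (∏ i, (X - C (l i))) = 0) :
    a * lagrangeIntertwiner l a b = lagrangeIntertwiner l a b * b := by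
  simp only [lagrangeIntertwiner, Finset.mul_sum, Finset.sum_mul, ← mul_assoc,
    mul_aeval_basis hl ha, mul_assoc _ _ b, aeval_basis_mul hl hb, smul_mul_assoc, mul_smul_comm]

theorem continuous_lagrangeIntertwiner [TopologicalSpace A] [IsTopologicalRing A]
    (l : ι → K) (a : A) : Continuous (lagrangeIntertwiner l a) :=
  continuous_finsetSum _ fun _ _ => continuous_const.mul (Polynomial.continuous_aeval _)

end Lagrange

section Exp

variable {A : Type*} [NormedRing A] [NormedAlgebra ℚ A] [CompleteSpace A]

theorem exp_neg_mul_exp (c : A) : exp (-c) * exp c = 1 := by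
  let := invertibleExp c
  rw [← invOf_exp, invOf_mul_self]

theorem exp_mul_exp_neg (c : A) : exp c * exp (-c) = 1 := by
  let := invertibleExp c
  rw [← invOf_exp, mul_invOf_self]

theorem aeval_exp_neg_mul_mul_exp {R : Type*} [CommSemiring R] [Algebra R A] (p : R[X])
    (a c : A) : aeval (exp (-c) * a * exp c) p = exp (-c) * aeval a p * exp c :=
  aeval_algHom_apply (MulSemiringAction.toAlgHom R A
    (ConjAct.toConjAct (⟨exp (-c), exp c, exp_neg_mul_exp c, exp_mul_exp_neg c⟩ : Aˣ))) a p

end Exp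

section ExpConj

variable {A : Type*} [NormedRing A]

def IsExpConj (a b : A) : Prop :=
  ∃ m, 1 ≤ m ∧ ∃ c : Fin m → A,
    b = (List.ofFn fun i => exp (-(c i))).reverse.prod * a * (List.ofFn fun i => exp (c i)).prod

theorem isExpConj_exp_neg_mul_mul_exp (a c : A) : IsExpConj a (exp (-c) * a * exp c) :=
  ⟨1, le_rfl, fun _ => c, by simp⟩

theorem IsExpConj.trans {a b d : A} : IsExpConj a b → IsExpConj b d → IsExpConj a d := by
  rintro ⟨m, hm, c, rfl⟩ ⟨m', -, c', rfl⟩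
  refine ⟨m + m', by omega, Fin.append c c', ?_⟩
  simp only [List.ofFn_comp' (Fin.append c c') fun x => exp (-x),
    List.ofFn_comp' (Fin.append c c') exp, List.ofFn_fin_append, List.map_append,
    List.reverse_append, List.prod_append, ← List.ofFn_comp', mul_assoc]

theorem isExpConj_of_exp_neg_mul_mul_exp [NormedAlgebra ℚ A] [CompleteSpace A] (a c : A) :
    IsExpConj (exp (-c) * a * exp c) a := by
  have h := isExpConj_exp_neg_mul_mul_exp (exp (-c) * a * exp c) (-c)
  convert h using 1
  rw [neg_neg, ← mul_assoc, ← mul_assoc, exp_mul_exp_neg, one_mul, mul_assoc, exp_mul_exp_neg,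
    mul_one]

end ExpConj

theorem exists_isOpen_eq_inter_of_forall_mem_nhdsWithin {X : Type*} [TopologicalSpace X]
    {s t : Set X} (hst : s ⊆ t) (h : ∀ x ∈ s, s ∈ 𝓝[t] x) : ∃ u, IsOpen u ∧ s = u ∩ t :=
  ⟨interior {y | y ∈ t → y ∈ s}, isOpen_interior, Set.Subset.antisymm
    (fun x hx => ⟨mem_interior_iff_mem_nhds.2 (mem_nhdsWithin_iff_eventually.1 (h x hx)), hst hx⟩)
    fun _ hx => interior_subset hx.1 hx.2⟩

section RCLike

variable {A : Type*} [NormedRing A] [CompleteSpace A]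

theorem range_exp_mem_nhds_one (𝕂 : Type*) [RCLike 𝕂] [NormedAlgebra 𝕂 A] :
    Set.range (exp : A → A) ∈ 𝓝 (1 : A) := by
  have h : HasStrictFDerivAt exp ((ContinuousLinearEquiv.refl 𝕂 A : A ≃L[𝕂] A) : A →L[𝕂] A) 0 :=
    hasStrictFDerivAt_exp_zero
  rw [← exp_zero (𝔸 := A), ← h.map_nhds_eq_of_equiv]
  exact range_mem_map

theorem exp_neg_mul_mul_exp_mem_connectedComponentIn (𝕂 : Type*) [RCLike 𝕂] [NormedAlgebra 𝕂 A]
    {S : Set A} (hS : ∀ x ∈ S, ∀ c, exp (-c) * x * exp c ∈ S) {x : A} (hx : x ∈ S) (c : A) :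
    exp (-c) * x * exp c ∈ connectedComponentIn S x := by
  let : NormedAlgebra ℚ A := .restrictScalars ℚ 𝕂 A
  let γ : 𝕂 → A := fun t => exp (-(t • c)) * x * exp (t • c)
  have hγ : Continuous γ := by fun_prop
  exact (isPreconnected_range hγ).subset_connectedComponentIn ⟨0, by simp [γ]⟩
    (Set.range_subset_iff.2 fun t => hS x hx _) ⟨1, by simp [γ]⟩

theorem eventually_exists_eq_exp_neg_mul_mul_exp {𝕂 ι : Type*} [RCLike 𝕂] [NormedAlgebra 𝕂 A]
    [Fintype ι] {l : ι → 𝕂} (hl : Function.Injective l) {a : A}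
    (ha : aeval a (∏ i, (X - C (l i))) = 0) :
    ∀ᶠ b in 𝓝[{b | aeval b (∏ i, (X - C (l i))) = 0}] a, ∃ c, b = exp (-c) * a * exp c := by
  classical
  let : NormedAlgebra ℚ A := .restrictScalars ℚ 𝕂 A
  have hT : Tendsto (lagrangeIntertwiner l a) (𝓝[{b | aeval b (∏ i, (X - C (l i))) = 0}] a)
      (𝓝 1) := by
    rw [← lagrangeIntertwiner_self hl ha]
    exact (continuous_lagrangeIntertwiner l a).continuousWithinAt
  filter_upwards [hT (range_exp_mem_nhds_one 𝕂), self_mem_nhdsWithin] with b ⟨c, hc⟩ hb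
  refine ⟨c, ?_⟩
  calc b = exp (-c) * (exp c * b) := by rw [← mul_assoc, exp_neg_mul_exp, one_mul]
    _ = exp (-c) * a * exp c := by rw [hc, ← mul_lagrangeIntertwiner hl ha hb, mul_assoc]

end RCLike

theorem stmt9_general {A : Type*} [NormedRing A] [NormedAlgebra ℂ A] [CompleteSpace A]
    (n : ℕ) (l : Fin n → ℂ) (hl : Function.Injective l)
    (Ep : Set A) (hEp : Ep = {a : A | aeval a (∏ i : Fin n, (X - C (l i))) = 0})
    (a₀ : A) (ha₀ : a₀ ∈ Ep) :
    (∃ U : Set A, IsOpen U ∧ connectedComponentIn Ep a₀ = U ∩ Ep) ∧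
      ∀ a₁ ∈ connectedComponentIn Ep a₀,
        ∃ (m : ℕ), 1 ≤ m ∧ ∃ c : Fin m → A,
          a₁ = (List.ofFn fun i => NormedSpace.exp (-(c i))).reverse.prod * a₀ *
                 (List.ofFn fun i => NormedSpace.exp (c i)).prod := by
  let : NormedAlgebra ℚ A := .restrictScalars ℚ ℂ A
  have hconj : ∀ x ∈ Ep, ∀ c, exp (-c) * x * exp c ∈ Ep := by
    simp_all [aeval_exp_neg_mul_mul_exp]
  have hlocal : ∀ x ∈ Ep, ∀ᶠ y in 𝓝[Ep] x, ∃ c, y = exp (-c) * x * exp c := by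
    subst hEp
    exact fun x hx => eventually_exists_eq_exp_neg_mul_mul_exp hl hx
  have hsub : connectedComponentIn Ep a₀ ⊆ Ep := connectedComponentIn_subset Ep a₀
  refine ⟨exists_isOpen_eq_inter_of_forall_mem_nhdsWithin hsub fun x hx => ?_, fun a₁ h => ?_⟩
  · rw [connectedComponentIn_eq hx]
    filter_upwards [hlocal x (hsub hx)] with y ⟨c, hy⟩
    rw [hy]
    exact exp_neg_mul_mul_exp_mem_connectedComponentIn ℂ hconj (hsub hx) c
  · refine isPreconnected_connectedComponentIn.induction₂' IsExpConj (fun x hx => ?_)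
      (fun _ _ _ _ _ _ => IsExpConj.trans) (mem_connectedComponentIn ha₀) h
    filter_upwards [nhdsWithin_mono _ hsub (hlocal x (hsub hx))] with y ⟨c, hy⟩
    rw [hy]
    exact ⟨isExpConj_exp_neg_mul_mul_exp x c, isExpConj_of_exp_neg_mul_mul_exp x c⟩

/-- Each connected component of `E_p(A)` is relatively open, and any two
of its elements are similar via a finite product of exponentials:
`a₁ = e^{-c_m} ⋯ e^{-c_1} a₀ e^{c_1} ⋯ e^{c_m}`. -/
theorem stmt9 {A : Type*} [NormedRing A] [NormedAlgebra ℂ A] [CompleteSpace A] [NormOneClass A]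
    (n : ℕ) (hn : 2 ≤ n) (l : Fin n → ℂ) (hl : Function.Injective l)
    (Ep : Set A) (hEp : Ep = {a : A | aeval a (∏ i : Fin n, (X - C (l i))) = 0})
    (a₀ : A) (ha₀ : a₀ ∈ Ep) :
    (∃ U : Set A, IsOpen U ∧ connectedComponentIn Ep a₀ = U ∩ Ep) ∧
      ∀ a₁ ∈ connectedComponentIn Ep a₀,
        ∃ (m : ℕ), 1 ≤ m ∧ ∃ c : Fin m → A,
          a₁ = (List.ofFn fun i => NormedSpace.exp (-(c i))).reverse.prod * a₀ *
                 (List.ofFn fun i => NormedSpace.exp (c i)).prod :=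
  stmt9_general n l hl Ep hEp a₀ ha₀
end

section
/- Let $A$ be a unital complex Banach algebra, $p$ a polynomial with distinct roots, and $a_0 \in E_p(A) = \{a : p(a)=0\}$. Then $a_0$ lies in the center of $A$ if and only if $\{a_0\}$ is the connected component of $a_0$ in $E_p(A)$ (i.e., $a_0$ is isolated in $E_p(A)$). -/
/-!
If `a₀` is central, then near `a₀` every root `a` of `p` commutes with `a₀`, so
`p(a) - p(a₀) = (a - a₀) · q(a, a₀)` for the divided difference `q`; since
`q(a₀, a₀) = p'(a₀)` is invertible (`p` is separable), `q(a, a₀)` stays invertible near `a₀`,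
forcing `a = a₀`. Conversely, `E_p(A)` is invariant under inner automorphisms, so for every `x`
the path `t ↦ exp(t x) a₀ exp(-t x)` stays in the component of `a₀`; if that component is
`{a₀}`, the path is constant and differentiating at `t = 0` gives `x a₀ = a₀ x`.
-/

open Polynomial NormedSpace

namespace Polynomial

variable {R A : Type*} [CommRing R] [Ring A] [Algebra R A]

theorem Separable.isUnit_aeval_derivative {p : R[X]} (hp : p.Separable) {a : A}
    (ha : aeval a p = 0) : IsUnit (aeval a (derivative p)) := by
  obtain ⟨u, v, huv⟩ := hp
  have hv : aeval a v * aeval a (derivative p) = 1 := by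
    simpa [ha] using congrArg (aeval a) huv
  refine isUnit_iff_exists.2 ⟨aeval a v, ?_, hv⟩
  rwa [← map_mul, mul_comm, map_mul]

theorem aeval_units_conj (p : R[X]) (u : Aˣ) (a : A) :
    aeval (↑u * a * ↑u⁻¹) p = ↑u * aeval a p * ↑u⁻¹ := by
  simpa only [MulSemiringAction.toAlgHom_apply, ConjAct.units_smul_def, ConjAct.ofConjAct_toConjAct]
    using aeval_algHom_apply (MulSemiringAction.toAlgHom R A (ConjAct.toConjAct u)) a p

noncomputable def aevalDiffQuot (p : R[X]) (a b : A) : A :=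
  ∑ k ∈ p.support, p.coeff k • ∑ j ∈ Finset.range k, a ^ j * b ^ (k - 1 - j)

theorem aeval_eq_sum_support (p : R[X]) (a : A) :
    aeval a p = ∑ k ∈ p.support, p.coeff k • a ^ k := by
  simp_rw [aeval_def, eval₂_eq_sum, Polynomial.sum, Algebra.smul_def]

theorem sub_mul_aevalDiffQuot (p : R[X]) {a b : A} (h : Commute a b) :
    (a - b) * aevalDiffQuot p a b = aeval a p - aeval b p := by
  rw [aevalDiffQuot, Finset.mul_sum, aeval_eq_sum_support, aeval_eq_sum_support,
    ← Finset.sum_sub_distrib]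
  refine Finset.sum_congr rfl fun k _ => ?_
  rw [mul_smul_comm, h.mul_geom_sum₂, smul_sub]

theorem aevalDiffQuot_self (p : R[X]) (a : A) :
    aevalDiffQuot p a a = aeval a (derivative p) := by
  rw [aevalDiffQuot, derivative_apply, Polynomial.sum, map_sum]
  refine Finset.sum_congr rfl fun k _ => ?_
  have hpow : ∀ j ∈ Finset.range k, a ^ j * a ^ (k - 1 - j) = a ^ (k - 1) := fun j hj => by
    rw [← pow_add, Nat.add_sub_cancel' (Nat.le_sub_one_of_lt (Finset.mem_range.1 hj))]
  rw [Finset.sum_congr rfl hpow, Finset.sum_const, Finset.card_range, map_mul, aeval_C, map_pow,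
    aeval_X, ← Nat.cast_smul_eq_nsmul R, smul_smul, Algebra.smul_def, map_mul]

theorem continuous_aevalDiffQuot_left [TopologicalSpace A] [IsTopologicalRing A]
    [TopologicalSpace R] [ContinuousSMul R A] (p : R[X]) (b : A) :
    Continuous fun a : A => aevalDiffQuot p a b := by
  unfold aevalDiffQuot
  fun_prop

end Polynomial

section Topology

variable {X : Type*} [TopologicalSpace X] [T1Space X]

theorem connectedComponentIn_eq_singleton_of_isOpen {s U : Set X} {x : X} (hU : IsOpen U)
    (hxU : x ∈ U) (hx : x ∈ s) (hUs : U ∩ s ⊆ {x}) : connectedComponentIn s x = {x} := by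
  refine subset_antisymm (fun y hy => ?_) (Set.singleton_subset_iff.2 (mem_connectedComponentIn hx))
  by_contra hyx
  obtain ⟨z, hzC, hzU, hzx⟩ := isPreconnected_connectedComponentIn U {x}ᶜ hU
    isOpen_compl_singleton (fun z _ => (eq_or_ne z x).imp (fun h => by rwa [h]) id)
    ⟨x, mem_connectedComponentIn hx, hxU⟩ ⟨y, hy, hyx⟩
  exact hzx (hUs ⟨hzU, connectedComponentIn_subset _ _ hzC⟩)

end Topology

section Central

variable {𝕜 A : Type*} [NormedField 𝕜] [NormedRing A] [NormedAlgebra 𝕜 A] [CompleteSpace A]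

theorem connectedComponentIn_aeval_eq_zero_eq_singleton {p : 𝕜[X]} (hp : p.Separable) {a₀ : A}
    (ha₀ : aeval a₀ p = 0) (hcentral : ∀ x, Commute x a₀) :
    connectedComponentIn {a : A | aeval a p = 0} a₀ = {a₀} := by
  refine connectedComponentIn_eq_singleton_of_isOpen
    (Units.isOpen.preimage (continuous_aevalDiffQuot_left p a₀))
    (by simpa [aevalDiffQuot_self] using hp.isUnit_aeval_derivative ha₀) ha₀ ?_
  rintro a ⟨ha_unit, ha⟩
  have : (a - a₀) * aevalDiffQuot p a a₀ = 0 := by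
    rw [sub_mul_aevalDiffQuot p (hcentral a), ha.out, ha₀, sub_zero]
  exact sub_eq_zero.1 ((IsUnit.mul_left_eq_zero ha_unit).1 this)

end Central

section Exp

variable (𝕂 : Type*) {A : Type*} [RCLike 𝕂] [NormedRing A] [NormedAlgebra 𝕂 A] [CompleteSpace A]

noncomputable def expUnit (x : A) : Aˣ :=
  letI := invertibleExpOfMemBall (𝕂 := 𝕂) (x := x)
    ((expSeries_radius_eq_top 𝕂 A).symm ▸ edist_lt_top _ _)
  unitOfInvertible (exp x)

@[simp] theorem coe_expUnit (x : A) : (expUnit 𝕂 x : A) = exp x := rfl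

@[simp] theorem coe_expUnit_inv (x : A) : ↑(expUnit 𝕂 x)⁻¹ = exp (-x) := rfl

variable {𝕂}

theorem commute_of_forall_commute_exp_smul {x a : A}
    (h : ∀ t : 𝕂, Commute (exp (t • x)) a) : Commute x a := by
  have hL := (hasDerivAt_exp_smul_const (𝕂 := 𝕂) x 0).mul_const a
  have hR := (hasDerivAt_exp_smul_const (𝕂 := 𝕂) x 0).const_mul a
  simp_rw [(h _).eq] at hL
  simpa [commute_iff_eq] using hL.unique hR

theorem continuous_conj_expUnit_smul (x a : A) :
    Continuous fun t : 𝕂 => (expUnit 𝕂 (t • x) : A) * a * ↑(expUnit 𝕂 (t • x))⁻¹ := by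
  simp only [coe_expUnit, coe_expUnit_inv, ← smul_neg]
  exact ((differentiable_exp_smul_const 𝕂 x).continuous.mul continuous_const).mul
    (differentiable_exp_smul_const 𝕂 (-x)).continuous

end Exp

theorem commute_of_connectedComponentIn_eq_singleton (𝕂 : Type*) {A : Type*} [RCLike 𝕂]
    [NormedRing A] [NormedAlgebra 𝕂 A] [CompleteSpace A] {s : Set A}
    (hs : ∀ (u : Aˣ), ∀ a ∈ s, ↑u * a * ↑u⁻¹ ∈ s) {a₀ : A} (ha₀ : a₀ ∈ s)
    (h : connectedComponentIn s a₀ = {a₀}) (x : A) : Commute x a₀ := by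
  refine commute_of_forall_commute_exp_smul (𝕂 := 𝕂) fun t => ?_
  have hrange : Set.range (fun t : 𝕂 => (expUnit 𝕂 (t • x) : A) * a₀ * ↑(expUnit 𝕂 (t • x))⁻¹)
      ⊆ connectedComponentIn s a₀ :=
    (isPreconnected_range (continuous_conj_expUnit_smul x a₀)).subset_connectedComponentIn
      ⟨0, by simp⟩ (Set.range_subset_iff.2 fun t => hs _ _ ha₀)
  exact (Units.mul_inv_eq_iff_eq_mul _).1 (h ▸ hrange ⟨t, rfl⟩)

theorem stmt10_general {A : Type*} [NormedRing A] [NormedAlgebra ℂ A] [CompleteSpace A]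
    (n : ℕ) (l : Fin n → ℂ) (hl : Function.Injective l)
    (Ep : Set A) (hEp : Ep = {a : A | aeval a (∏ i : Fin n, (X - C (l i))) = 0})
    (a₀ : A) (ha₀ : a₀ ∈ Ep) :
    (∀ x : A, a₀ * x = x * a₀) ↔ connectedComponentIn Ep a₀ = {a₀} := by
  subst hEp
  refine ⟨fun hcentral => connectedComponentIn_aeval_eq_zero_eq_singleton
    (separable_prod_X_sub_C_iff.2 hl) ha₀ fun x => (hcentral x).symm, fun h x => ?_⟩
  refine (commute_of_connectedComponentIn_eq_singleton ℂ (fun u a ha => ?_) ha₀ h x).symm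
  show aeval _ _ = 0
  rw [aeval_units_conj, ha.out, mul_zero, zero_mul]

/-- An element `a₀ ∈ E_p(A)` is central if and only if it is isolated in
`E_p(A)`, i.e. its connected component in `E_p(A)` is the singleton `{a₀}`. -/
theorem stmt10 {A : Type*} [NormedRing A] [NormedAlgebra ℂ A] [CompleteSpace A] [NormOneClass A]
    (n : ℕ) (hn : 2 ≤ n) (l : Fin n → ℂ) (hl : Function.Injective l)
    (Ep : Set A) (hEp : Ep = {a : A | aeval a (∏ i : Fin n, (X - C (l i))) = 0})
    (a₀ : A) (ha₀ : a₀ ∈ Ep) :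
    (∀ x : A, a₀ * x = x * a₀) ↔ connectedComponentIn Ep a₀ = {a₀} :=
  stmt10_general n l hl Ep hEp a₀ ha₀
end

section
/- Let $A$ be a unital complex Banach algebra, $p$ a polynomial with distinct roots $\lambda_1,\dots,\lambda_n$ ($n \geq 2$), and $C$ a connected component of $E_p(A)$ that does not intersect the center of $A$. Then every element $a \in C$ lies on a complex affine line entirely contained in $C$; in particular, $C$ is unbounded. -/
open Polynomial

section helpers
variable {A : Type*} [Ring A] [Algebra ℂ A]

lemma aux_pow_right {a N : A} {lam : ℂ} (h : a * N = lam • N) :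
    ∀ m : ℕ, a ^ m * N = lam ^ m • N
  | 0 => by simp
  | m + 1 => by
      rw [pow_succ, mul_assoc, h, mul_smul_comm, aux_pow_right h m, smul_smul, pow_succ,
        mul_comm]

lemma aux_pow_left {a N : A} {mu : ℂ} (h : N * a = mu • N) :
    ∀ m : ℕ, N * a ^ m = mu ^ m • N
  | 0 => by simp
  | m + 1 => by
      rw [pow_succ, ← mul_assoc, aux_pow_left h m, smul_mul_assoc, h, smul_smul, pow_succ]

lemma aux_aeval_right {a N : A} {lam : ℂ} (h : a * N = lam • N) (q : ℂ[X]) :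
    aeval a q * N = q.eval lam • N := by
  induction q using Polynomial.induction_on' with
  | add p q hp hq => rw [map_add, add_mul, hp, hq, eval_add, add_smul]
  | monomial m c =>
      rw [aeval_monomial, eval_monomial, mul_assoc, aux_pow_right h m,
        Algebra.smul_def, ← mul_assoc, ← map_mul, ← Algebra.smul_def]

lemma aux_aeval_left {a N : A} {mu : ℂ} (h : N * a = mu • N) (q : ℂ[X]) :
    N * aeval a q = q.eval mu • N := by
  induction q using Polynomial.induction_on' with
  | add p q hp hq => rw [map_add, mul_add, hp, hq, eval_add, add_smul]
  | monomial m c =>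
      rw [aeval_monomial, eval_monomial, ← mul_assoc, ← Algebra.commutes, mul_assoc,
        aux_pow_left h m, Algebra.smul_def, ← mul_assoc, ← map_mul, ← Algebra.smul_def]

lemma aux_key_pow {a N : A} {lam mu : ℂ} (hne : lam ≠ mu) (hN2 : N * N = 0)
    (h1 : a * N = lam • N) (h2 : N * a = mu • N) :
    ∀ m : ℕ, (a + N) ^ m = a ^ m + ((lam ^ m - mu ^ m) / (lam - mu)) • N
  | 0 => by simp
  | m + 1 => by
      have hd : lam - mu ≠ 0 := sub_ne_zero.mpr hne
      rw [pow_succ, aux_key_pow hne hN2 h1 h2 m, add_mul, mul_add, mul_add,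
        smul_mul_assoc, smul_mul_assoc, hN2, smul_zero, add_zero, h2,
        aux_pow_right h1 m, smul_smul, ← pow_succ, add_assoc, ← add_smul]
      congr 1
      field_simp
      ring

lemma aux_key {a N : A} {lam mu : ℂ} (hne : lam ≠ mu) (hN2 : N * N = 0)
    (h1 : a * N = lam • N) (h2 : N * a = mu • N) (q : ℂ[X]) :
    aeval (a + N) q = aeval a q + ((q.eval lam - q.eval mu) / (lam - mu)) • N := by
  induction q using Polynomial.induction_on' with
  | add p q hp hq =>
      rw [map_add, map_add, hp, hq, eval_add, eval_add]
      rw [show p.eval lam + q.eval lam - (p.eval mu + q.eval mu)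
          = (p.eval lam - p.eval mu) + (q.eval lam - q.eval mu) by ring, add_div, add_smul]
      abel
  | monomial m c =>
      rw [aeval_monomial, aeval_monomial, eval_monomial, eval_monomial,
        aux_key_pow hne hN2 h1 h2 m, mul_add, Algebra.smul_def, ← mul_assoc, ← map_mul,
        ← Algebra.smul_def]
      rw [show (algebraMap ℂ A) (c * ((lam ^ m - mu ^ m) / (lam - mu))) * N
          = (c * ((lam ^ m - mu ^ m) / (lam - mu))) • N from (Algebra.smul_def _ _).symm]
      congr 2
      ring

end helpers


/-- If a connected component `Cc` of `E_p(A)` does not meet the center of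
`A`, then every element of `Cc` lies on a complex affine line contained in `Cc`; in
particular `Cc` is unbounded. -/
theorem stmt11 {A : Type*} [NormedRing A] [NormedAlgebra ℂ A] [CompleteSpace A] [NormOneClass A]
    (n : ℕ) (hn : 2 ≤ n) (l : Fin n → ℂ) (hl : Function.Injective l)
    (Ep : Set A) (hEp : Ep = {a : A | aeval a (∏ i : Fin n, (X - C (l i))) = 0})
    (Cc : Set A) (hCc : ∃ a₀ ∈ Ep, Cc = connectedComponentIn Ep a₀)
    (hcenter : ∀ z ∈ Cc, ∃ x : A, z * x ≠ x * z) :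
    (∀ a ∈ Cc, ∃ v : A, v ≠ 0 ∧ ∀ ζ : ℂ, a + ζ • v ∈ Cc) ∧
      ¬ Bornology.IsBounded Cc := by
  obtain ⟨a₀, ha₀, hCcEq⟩ := hCc
  haveI : Nonempty (Fin n) := ⟨⟨0, by omega⟩⟩
  set p : ℂ[X] := ∏ i : Fin n, (X - C (l i)) with hp
  have hroot : ∀ i : Fin n, p.eval (l i) = 0 := by
    intro i
    rw [hp, eval_prod]
    exact Finset.prod_eq_zero (Finset.mem_univ i) (by simp)
  have hbasis : ∀ i : Fin n,
      Lagrange.basis Finset.univ l i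
      = C (∏ j ∈ Finset.univ.erase i, (l i - l j)⁻¹)
        * ∏ j ∈ Finset.univ.erase i, (X - C (l j)) := by
    intro i
    rw [Lagrange.basis]
    simp only [Lagrange.basisDivisor]
    rw [Finset.prod_mul_distrib, map_prod]
  -- key fact : line construction
  have hline : ∀ a ∈ Cc, ∃ v : A, v ≠ 0 ∧ ∀ ζ : ℂ, a + ζ • v ∈ Cc := by
    intro a ha
    have haEp : a ∈ Ep := connectedComponentIn_subset Ep a₀ (hCcEq ▸ ha)
    have hpa : aeval a p = 0 := by rw [hEp] at haEp; exact haEp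
    obtain ⟨x, hx⟩ := hcenter a ha
    set e : Fin n → A := fun i => aeval a (Lagrange.basis Finset.univ l i) with he
    have hsum : ∑ i : Fin n, e i = 1 := by
      rw [he, ← map_sum,
        Lagrange.sum_basis (Function.Injective.injOn hl) Finset.univ_nonempty, map_one]
    have haei : ∀ i, a * e i = l i • e i := by
      intro i
      have key : (X - C (l i)) * Lagrange.basis Finset.univ l i
          = C (∏ j ∈ Finset.univ.erase i, (l i - l j)⁻¹) * p := by
        rw [hbasis i, mul_left_comm]
        congr 1
        rw [hp]
        exact Finset.mul_prod_erase Finset.univ (fun k => X - C (l k)) (Finset.mem_univ i)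
      have h0 : (a - algebraMap ℂ A (l i)) * e i = 0 := by
        have := congrArg (aeval a) key
        simpa [map_mul, hpa, Algebra.smul_def] using this
      rw [sub_mul, sub_eq_zero] at h0
      rw [h0, Algebra.smul_def]
    have heia : ∀ i, e i * a = l i • e i := by
      intro i
      have key : Lagrange.basis Finset.univ l i * (X - C (l i))
          = C (∏ j ∈ Finset.univ.erase i, (l i - l j)⁻¹) * p := by
        rw [mul_comm, hbasis i, mul_left_comm]
        congr 1
        rw [hp]
        exact Finset.mul_prod_erase Finset.univ (fun k => X - C (l k)) (Finset.mem_univ i)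
      have h0 : e i * (a - algebraMap ℂ A (l i)) = 0 := by
        have := congrArg (aeval a) key
        simpa [map_mul, hpa, Algebra.smul_def] using this
      rw [mul_sub, sub_eq_zero] at h0
      rw [h0, ← Algebra.commutes, Algebra.smul_def]
    have heij : ∀ i j : Fin n, i ≠ j → e i * e j = 0 := by
      intro i j hij
      have hdvd : p ∣ Lagrange.basis Finset.univ l i * Lagrange.basis Finset.univ l j := by
        obtain ⟨q, hq⟩ := Finset.dvd_prod_of_mem (fun k => X - C (l k))
          (Finset.mem_erase.mpr ⟨hij, Finset.mem_univ i⟩)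
        refine ⟨C (∏ k ∈ Finset.univ.erase i, (l i - l k)⁻¹)
          * C (∏ k ∈ Finset.univ.erase j, (l j - l k)⁻¹) * q, ?_⟩
        rw [hbasis i, hbasis j, hq, hp,
          ← Finset.mul_prod_erase Finset.univ (fun k => X - C (l k)) (Finset.mem_univ i)]
        ring
      obtain ⟨q, hq⟩ := hdvd
      rw [he]
      rw [← map_mul, hq, map_mul, hpa, zero_mul]
    -- find i ≠ j with e i * x * e j ≠ 0
    have hex : ∃ i j : Fin n, i ≠ j ∧ e i * x * e j ≠ 0 := by
      by_contra hcon
      push_neg at hcon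
      apply hx
      have hx2 : x = ∑ i : Fin n, e i * x * e i := by
        calc x = (∑ i : Fin n, e i) * x * (∑ j : Fin n, e j) := by rw [hsum]; simp
        _ = ∑ i : Fin n, ∑ j : Fin n, e i * x * e j := by
            rw [Finset.sum_mul, Finset.sum_mul]
            exact Finset.sum_congr rfl fun i _ => by rw [Finset.mul_sum]
        _ = ∑ i : Fin n, e i * x * e i := by
            refine Finset.sum_congr rfl fun i _ => ?_
            exact Finset.sum_eq_single i (fun j _ hj => hcon i j (Ne.symm hj)) (by simp)
      have ha1 : a * x = ∑ i : Fin n, l i • (e i * x * e i) := by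
        conv_lhs => rw [hx2]
        rw [Finset.mul_sum]
        refine Finset.sum_congr rfl fun i _ => ?_
        simp only [← mul_assoc]
        rw [haei i, smul_mul_assoc, smul_mul_assoc]
      have ha2 : x * a = ∑ i : Fin n, l i • (e i * x * e i) := by
        conv_lhs => rw [hx2]
        rw [Finset.sum_mul]
        refine Finset.sum_congr rfl fun i _ => ?_
        rw [mul_assoc (e i * x) (e i) a, heia i, mul_smul_comm]
      rw [ha1, ha2]
    obtain ⟨i, j, hij, hv⟩ := hex
    set v : A := e i * x * e j with hvdef
    have hji : e j * e i = 0 := heij j i (Ne.symm hij)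
    have hv2 : v * v = 0 := by
      calc v * v = (e i * x) * (e j * e i) * (x * e j) := by
            simp only [hvdef, mul_assoc]
        _ = 0 := by rw [hji, mul_zero, zero_mul]
    have hav : a * v = l i • v := by
      rw [hvdef]
      simp only [← mul_assoc]
      rw [haei i, smul_mul_assoc, smul_mul_assoc]
    have hva : v * a = l j • v := by
      rw [hvdef, mul_assoc, heia j, mul_smul_comm]
    have hne : l i ≠ l j := fun h => hij (hl h)
    have hlineEp : ∀ ζ : ℂ, a + ζ • v ∈ Ep := by
      intro ζ
      rw [hEp]
      show aeval (a + ζ • v) p = 0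
      have hN2 : (ζ • v) * (ζ • v) = 0 := by
        rw [smul_mul_assoc, mul_smul_comm, hv2, smul_zero, smul_zero]
      have h1 : a * (ζ • v) = l i • (ζ • v) := by
        rw [mul_smul_comm, hav, smul_smul, smul_smul, mul_comm]
      have h2 : (ζ • v) * a = l j • (ζ • v) := by
        rw [smul_mul_assoc, hva, smul_smul, smul_smul, mul_comm]
      rw [aux_key hne hN2 h1 h2 p, hpa, hroot i, hroot j]
      simp
    refine ⟨v, hv, fun ζ => ?_⟩
    rw [hCcEq] at ha ⊢
    rw [connectedComponentIn_eq ha]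
    have hcont : Continuous fun ζ : ℂ => a + ζ • v :=
      continuous_const.add (continuous_id.smul continuous_const)
    have hconn : IsPreconnected (Set.range fun ζ : ℂ => a + ζ • v) :=
      (isConnected_range hcont).isPreconnected
    have hmem : a ∈ Set.range fun ζ : ℂ => a + ζ • v := ⟨0, by simp⟩
    have hsub : Set.range (fun ζ : ℂ => a + ζ • v) ⊆ Ep := by
      rintro _ ⟨ζ, rfl⟩; exact hlineEp ζ
    exact hconn.subset_connectedComponentIn hmem hsub ⟨ζ, rfl⟩
  refine ⟨hline, ?_⟩
  intro hb
  have haCc : a₀ ∈ Cc := hCcEq ▸ mem_connectedComponentIn ha₀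
  obtain ⟨v, hv, hL⟩ := hline a₀ haCc
  obtain ⟨R, hR⟩ := isBounded_iff_forall_norm_le.mp hb
  have hvpos : (0:ℝ) < ‖v‖ := norm_pos_iff.mpr hv
  have hR0 : ‖a₀‖ ≤ R := hR a₀ haCc
  set t : ℝ := (R + ‖a₀‖ + 1) / ‖v‖ with ht
  have hmem := hL (t : ℂ)
  have hle := hR _ hmem
  have ht0 : 0 ≤ t := by
    have h0 : (0:ℝ) ≤ R := le_trans (norm_nonneg _) hR0
    rw [ht]
    apply div_nonneg
    · linarith [norm_nonneg a₀]
    · linarith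
  have hnorm : ‖(t:ℂ) • v‖ = t * ‖v‖ := by
    rw [norm_smul, Complex.norm_real, Real.norm_eq_abs, abs_of_nonneg ht0]
  have htv : t * ‖v‖ = R + ‖a₀‖ + 1 := div_mul_cancel₀ _ (ne_of_gt hvpos)
  have hsub := norm_sub_le (a₀ + (t:ℂ) • v) a₀
  simp only [add_sub_cancel_left] at hsub
  rw [hnorm, htv] at hsub
  linarith
end

section
/- Let $A$ be a unital complex Banach algebra and $e_0, e_1 \in A$ idempotents with $\|e_1 - e_0\| < 1$. Then $e_0 + e_1 - 1$ is invertible, and the Kovarik element $g := e_1(1 - (e_1-e_0)^2)^{-1}e_0$ satisfies: $g^2 = g$, $e_1 g = g$, $g e_1 = e_1$, $e_0 g = e_0$, $g e_0 = g$. -/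
lemma stmt15_aux {A : Type*} [Ring A]
    (e₀ e₁ : A) (h₀ : e₀ * e₀ = e₀) (h₁ : e₁ * e₁ = e₁)
    (u v : A) (hu_def : u = 1 - (e₁ - e₀) ^ 2) (huv : u * v = 1) (hvu : v * u = 1) :
    IsUnit (e₀ + e₁ - 1) ∧
      (e₁ * v * e₀) * (e₁ * v * e₀) = e₁ * v * e₀ ∧
      e₁ * (e₁ * v * e₀) = e₁ * v * e₀ ∧ (e₁ * v * e₀) * e₁ = e₁ ∧
      e₀ * (e₁ * v * e₀) = e₀ ∧ (e₁ * v * e₀) * e₀ = e₁ * v * e₀ := by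
  have hsq : (e₁ - e₀) ^ 2 = e₁ - e₁ * e₀ - e₀ * e₁ + e₀ := by
    have h : (e₁ - e₀) ^ 2 = e₁ * e₁ - e₁ * e₀ - e₀ * e₁ + e₀ * e₀ := by noncomm_ring
    rw [h, h₀, h₁]
  have hu_e1 : e₁ * u = e₁ * e₀ * e₁ := by
    rw [hu_def, hsq]
    have h : e₁ * (1 - (e₁ - e₁ * e₀ - e₀ * e₁ + e₀)) =
        e₁ - e₁ * e₁ + e₁ * e₁ * e₀ + e₁ * e₀ * e₁ - e₁ * e₀ := by noncomm_ring
    rw [h, h₁]; abel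
  have he1_u : u * e₁ = e₁ * e₀ * e₁ := by
    rw [hu_def, hsq]
    have h : (1 - (e₁ - e₁ * e₀ - e₀ * e₁ + e₀)) * e₁ =
        e₁ - e₁ * e₁ + e₁ * e₀ * e₁ + e₀ * (e₁ * e₁) - e₀ * e₁ := by noncomm_ring
    rw [h, h₁]; abel
  have hu_e0 : e₀ * u = e₀ * e₁ * e₀ := by
    rw [hu_def, hsq]
    have h : e₀ * (1 - (e₁ - e₁ * e₀ - e₀ * e₁ + e₀)) =
        e₀ - e₀ * e₁ + e₀ * e₁ * e₀ + e₀ * (e₀ * e₁) - e₀ * e₀ := by noncomm_ring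
    rw [h, h₀, ← mul_assoc, h₀]; abel
  have he0_u : u * e₀ = e₀ * e₁ * e₀ := by
    rw [hu_def, hsq]
    have h : (1 - (e₁ - e₁ * e₀ - e₀ * e₁ + e₀)) * e₀ =
        e₀ - e₁ * e₀ + e₁ * (e₀ * e₀) + e₀ * e₁ * e₀ - e₀ * e₀ := by noncomm_ring
    rw [h, h₀]; abel
  have comm_inv : ∀ x : A, x * u = u * x → x * v = v * x := by
    intro x hx
    calc x * v = v * u * (x * v) := by rw [hvu, one_mul]
      _ = v * (u * x) * v := by noncomm_ring
      _ = v * (x * u) * v := by rw [hx]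
      _ = v * x * (u * v) := by noncomm_ring
      _ = v * x := by rw [huv, mul_one]
  have hc01u : (e₀ * e₁) * u = u * (e₀ * e₁) := by
    calc (e₀ * e₁) * u = e₀ * (e₁ * u) := by rw [mul_assoc]
      _ = e₀ * (e₁ * e₀ * e₁) := by rw [hu_e1]
      _ = (e₀ * e₁ * e₀) * e₁ := by noncomm_ring
      _ = (u * e₀) * e₁ := by rw [he0_u]
      _ = u * (e₀ * e₁) := by rw [mul_assoc]
  have hc01 : (e₀ * e₁) * v = v * (e₀ * e₁) := comm_inv _ hc01u
  have hge1 : (e₁ * v * e₀) * e₁ = e₁ := by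
    calc e₁ * v * e₀ * e₁ = e₁ * (v * (e₀ * e₁)) := by noncomm_ring
      _ = e₁ * (e₀ * e₁ * v) := by rw [← hc01]
      _ = (e₁ * e₀ * e₁) * v := by noncomm_ring
      _ = e₁ * u * v := by rw [← hu_e1]
      _ = e₁ * (u * v) := by rw [mul_assoc]
      _ = e₁ := by rw [huv, mul_one]
  have hge0 : (e₁ * v * e₀) * e₀ = e₁ * v * e₀ := by rw [mul_assoc, h₀]
  have he1g : e₁ * (e₁ * v * e₀) = e₁ * v * e₀ := by
    rw [← mul_assoc, ← mul_assoc, h₁]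
  have he0g : e₀ * (e₁ * v * e₀) = e₀ := by
    calc e₀ * (e₁ * v * e₀) = (e₀ * e₁) * v * e₀ := by noncomm_ring
      _ = v * (e₀ * e₁) * e₀ := by rw [hc01]
      _ = v * (e₀ * e₁ * e₀) := by rw [mul_assoc]
      _ = v * (u * e₀) := by rw [he0_u]
      _ = (v * u) * e₀ := by rw [mul_assoc]
      _ = e₀ := by rw [hvu, one_mul]
  have hgg : (e₁ * v * e₀) * (e₁ * v * e₀) = e₁ * v * e₀ := by
    calc (e₁ * v * e₀) * (e₁ * v * e₀) = ((e₁ * v * e₀) * e₁) * v * e₀ := by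
          rw [← mul_assoc, ← mul_assoc]
      _ = e₁ * v * e₀ := by rw [hge1]
  have hx : (e₀ + e₁ - 1) * (e₀ + e₁ - 1) = u := by
    rw [hu_def, hsq]
    have h : (e₀ + e₁ - 1) * (e₀ + e₁ - 1) =
        e₀ * e₀ + e₀ * e₁ + e₁ * e₀ + e₁ * e₁ - 2 * e₀ - 2 * e₁ + 1 := by noncomm_ring
    rw [h, h₀, h₁]; noncomm_ring
  have hxu : (e₀ + e₁ - 1) * u = u * (e₀ + e₁ - 1) := by
    rw [← hx]; noncomm_ring
  have hxv : (e₀ + e₁ - 1) * v = v * (e₀ + e₁ - 1) := comm_inv _ hxu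
  have hxunit : IsUnit (e₀ + e₁ - 1) := by
    refine isUnit_iff_exists.mpr ⟨(e₀ + e₁ - 1) * v, ?_, ?_⟩
    · rw [← mul_assoc, hx, huv]
    · rw [hxv, mul_assoc, hx, hvu]
  exact ⟨hxunit, hgg, he1g, hge1, he0g, hge0⟩

/-- For idempotents `e₀, e₁` with `‖e₁ - e₀‖ < 1`, the element
`e₀ + e₁ - 1` is invertible (as is `1 - (e₁ - e₀)^2`), and the Kovarik element
`g = e₁ (1 - (e₁ - e₀)²)⁻¹ e₀` satisfies `g² = g`, `e₁ g = g`, `g e₁ = e₁`,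
`e₀ g = e₀`, `g e₀ = g`. -/
theorem stmt15 {A : Type*} [NormedRing A] [NormedAlgebra ℂ A] [CompleteSpace A]
    [NormOneClass A]
    (e₀ e₁ : A) (h₀ : e₀ * e₀ = e₀) (h₁ : e₁ * e₁ = e₁) (hclose : ‖e₁ - e₀‖ < 1)
    (g : A) (hg : g = e₁ * Ring.inverse (1 - (e₁ - e₀) ^ 2) * e₀) :
    IsUnit (e₀ + e₁ - 1) ∧ IsUnit (1 - (e₁ - e₀) ^ 2) ∧
      g * g = g ∧ e₁ * g = g ∧ g * e₁ = e₁ ∧ e₀ * g = e₀ ∧ g * e₀ = g := by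
  have hnorm : ‖(e₁ - e₀) ^ 2‖ < 1 := by
    calc ‖(e₁ - e₀) ^ 2‖ ≤ ‖e₁ - e₀‖ ^ 2 := norm_pow_le' _ (by norm_num)
      _ < 1 := pow_lt_one₀ (norm_nonneg _) hclose (by norm_num)
  have huu : IsUnit (1 - (e₁ - e₀) ^ 2) := (Units.oneSub _ hnorm).isUnit
  obtain ⟨hxunit, hgg, he1g, hge1, he0g, hge0⟩ :=
    stmt15_aux e₀ e₁ h₀ h₁ (1 - (e₁ - e₀) ^ 2) (Ring.inverse (1 - (e₁ - e₀) ^ 2)) rfl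
      (Ring.mul_inverse_cancel _ huu) (Ring.inverse_mul_cancel _ huu)
  rw [hg]
  exact ⟨hxunit, huu, hgg, he1g, hge1, he0g, hge0⟩
end

section
/- Let $A$ be a unital complex Banach algebra, $e_{01},\dots,e_{0n}$ a partition of unity into pairwise orthogonal idempotents, and $e_{11}$ an idempotent with $\|e_{11} - e_{01}\| < 1$. Let $g = e_{11}(e_{01}+e_{11}-1)^{-2}e_{01}$ be the Kovarik element. Then for every $t \in \mathbb{C}$, the elements $(1-t)e_{01} + tg$ together with $(1-t)e_{0i} + te_{0i}(1-g) = e_{0i} - te_{0i}g$ for $2 \leq i \leq n$ form a partition of unity into pairwise orthogonal idempotents. -/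
set_option linter.unusedSectionVars false in
theorem kov_core {A : Type*} [NormedRing A] [CompleteSpace A]
    (e f : A) (he : e * e = e) (hf : f * f = f) (hclose : ‖f - e‖ < 1) :
    e * (f * Ring.inverse ((e + f - 1) ^ 2) * e) = e := by
  set u2 := (e + f - 1) ^ 2 with hu2
  have he' : ∀ x : A, e * (e * x) = e * x := fun x => by rw [← mul_assoc, he]
  have hf' : ∀ x : A, f * (f * x) = f * x := fun x => by rw [← mul_assoc, hf]
  have h2 : u2 = 1 - (f - e) ^ 2 := by
    simp only [hu2, pow_two, mul_sub, sub_mul, mul_add, add_mul, mul_one, one_mul, mul_assoc,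
      he, hf, he', hf']
    abel
  have hn2 : ‖(f - e) ^ 2‖ < 1 := by
    have h := norm_mul_le (f - e) (f - e)
    rw [pow_two]
    nlinarith [norm_nonneg (f - e)]
  have hu : IsUnit u2 := h2 ▸ isUnit_one_sub_of_norm_lt_one hn2
  have hiu : Ring.inverse u2 * u2 = 1 := Ring.inverse_mul_cancel _ hu
  have hui : u2 * Ring.inverse u2 = 1 := Ring.mul_inverse_cancel _ hu
  set i := Ring.inverse u2 with hi
  have hce : u2 * e = e * (f * e) := by
    simp only [h2, pow_two, mul_sub, sub_mul, mul_add, add_mul, mul_one, one_mul, mul_assoc,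
      he, hf, he', hf']
    abel
  have hec : e * u2 = e * (f * e) := by
    simp only [h2, pow_two, mul_sub, sub_mul, mul_add, add_mul, mul_one, one_mul, mul_assoc,
      he, hf, he', hf']
    abel
  have hcf : u2 * f = f * (e * f) := by
    simp only [h2, pow_two, mul_sub, sub_mul, mul_add, add_mul, mul_one, one_mul, mul_assoc,
      he, hf, he', hf']
    abel
  have hfc : f * u2 = f * (e * f) := by
    simp only [h2, pow_two, mul_sub, sub_mul, mul_add, add_mul, mul_one, one_mul, mul_assoc,
      he, hf, he', hf']
    abel
  have hcomf : f * i = i * f := by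
    calc f * i = i * u2 * f * i := by rw [hiu, one_mul]
      _ = i * ((u2 * f) * i) := by noncomm_ring
      _ = i * ((f * u2) * i) := by rw [hfc, hcf]
      _ = i * f * (u2 * i) := by noncomm_ring
      _ = i * f := by rw [hui, mul_one]
  have hcome : e * i = i * e := by
    calc e * i = i * u2 * e * i := by rw [hiu, one_mul]
      _ = i * ((u2 * e) * i) := by noncomm_ring
      _ = i * ((e * u2) * i) := by rw [hce, hec]
      _ = i * e * (u2 * i) := by noncomm_ring
      _ = i * e := by rw [hui, mul_one]
  calc e * (f * i * e) = (e * i) * (f * e) := by rw [hcomf]; noncomm_ring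
    _ = i * (e * (f * e)) := by rw [hcome]; noncomm_ring
    _ = i * (e * u2) := by rw [hec]
    _ = i * u2 * e := by rw [hec, ← hce, mul_assoc]
    _ = e := by rw [hiu, one_mul]

/-- Linear interpolation with the Kovarik element: given a partition of
unity `e₀₁,…,e₀ₙ` and an idempotent `e₁₁` with `‖e₁₁ - e₀₁‖ < 1`, with
`g = e₁₁ (e₀₁ + e₁₁ - 1)⁻² e₀₁`, for every `t ∈ ℂ` the elements `(1-t) e₀₁ + t g`
and `(1-t) e₀ᵢ + t e₀ᵢ (1 - g) = e₀ᵢ - t e₀ᵢ g` (for `i ≥ 2`) form a partition of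
unity into pairwise orthogonal idempotents. -/
theorem stmt16 {A : Type*} [NormedRing A] [NormedAlgebra ℂ A] [CompleteSpace A]
    [NormOneClass A]
    (n : ℕ) (hn : 1 ≤ n) (e₀ : Fin n → A)
    (hidem : ∀ i, e₀ i * e₀ i = e₀ i)
    (horth : ∀ i j, i ≠ j → e₀ i * e₀ j = 0) (hsum : ∑ i, e₀ i = 1)
    (k : Fin n) (hk : k = ⟨0, by omega⟩)
    (e₁₁ : A) (h₁₁ : e₁₁ * e₁₁ = e₁₁) (hclose : ‖e₁₁ - e₀ k‖ < 1)
    (g : A) (hg : g = e₁₁ * Ring.inverse ((e₀ k + e₁₁ - 1) ^ 2) * e₀ k)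
    (t : ℂ) (f : Fin n → A)
    (hf : f = fun i => if i = k then (1 - t) • e₀ k + t • g else e₀ i - t • (e₀ i * g)) :
    (∀ i, f i * f i = f i) ∧ (∀ i j, i ≠ j → f i * f j = 0) ∧ ∑ i, f i = 1 := by
  set e := e₀ k with hedef
  have he : e * e = e := hidem k
  have heg : e * g = e := by rw [hg]; exact kov_core e e₁₁ he h₁₁ hclose
  have hge : g * e = g := by rw [hg, mul_assoc, he]
  have hgg : g * g = g := by
    nth_rewrite 1 [hg]
    rw [mul_assoc, heg, ← hg]
  have hgj : ∀ j, j ≠ k → g * e₀ j = 0 := fun j hj => by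
    rw [hg, mul_assoc, mul_assoc, horth k j (Ne.symm hj), mul_zero, mul_zero]
  have hej : ∀ j, j ≠ k → e * e₀ j = 0 := fun j hj => horth k j (Ne.symm hj)
  have hje : ∀ j, j ≠ k → e₀ j * e = 0 := fun j hj => horth j k hj
  refine ⟨?_, ?_, ?_⟩
  · intro i
    by_cases hik : i = k
    · subst hik
      simp only [hf, if_pos rfl]
      simp only [add_mul, mul_add, smul_mul_assoc, mul_smul_comm, smul_smul, he, heg, hge, hgg]
      module
    · simp only [hf, if_neg hik]
      simp only [sub_mul, mul_sub, smul_mul_assoc, mul_smul_comm, smul_smul, mul_assoc,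
        hgj i hik, hidem i, mul_zero, zero_mul, smul_zero]
      have h1 : e₀ i * (e₀ i * g) = e₀ i * g := by rw [← mul_assoc, hidem i]
      have h2 : e₀ i * (g * (e₀ i * g)) = 0 := by
        rw [← mul_assoc g, hgj i hik, zero_mul, mul_zero]
      rw [h1, h2]
      module
  · intro i j hij
    by_cases hik : i = k
    · subst hik
      have hjk : j ≠ i := fun h => hij h.symm
      simp only [hf, if_pos rfl, if_neg hjk]
      have h1 : e * (e₀ j * g) = 0 := by rw [← mul_assoc, hej j hjk, zero_mul]
      have h2 : g * (e₀ j * g) = 0 := by rw [← mul_assoc, hgj j hjk, zero_mul]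
      simp only [add_mul, mul_sub, smul_mul_assoc, mul_smul_comm, smul_smul,
        hej j hjk, hgj j hjk, h1, h2, smul_zero, sub_zero, add_zero, zero_add]
    · by_cases hjk : j = k
      · subst hjk
        simp only [hf, if_pos rfl, if_neg hik]
        have h1 : e₀ i * g * e = e₀ i * g := by rw [mul_assoc, hge]
        have h2 : e₀ i * g * g = e₀ i * g := by rw [mul_assoc, hgg]
        simp only [sub_mul, mul_add, smul_mul_assoc, mul_smul_comm, smul_smul,
          hje i hik, h1, h2, smul_zero, zero_add]
        module
      · simp only [hf, if_neg hik, if_neg hjk]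
        have h0 : e₀ i * e₀ j = 0 := horth i j hij
        have h1 : e₀ i * (e₀ j * g) = 0 := by rw [← mul_assoc, h0, zero_mul]
        have h2 : e₀ i * g * e₀ j = 0 := by rw [mul_assoc, hgj j hjk, mul_zero]
        have h3 : e₀ i * g * (e₀ j * g) = 0 := by
          rw [mul_assoc, ← mul_assoc g, hgj j hjk, zero_mul, mul_zero]
        simp only [sub_mul, mul_sub, smul_mul_assoc, mul_smul_comm, smul_smul,
          h0, h1, h2, h3, smul_zero, sub_zero, zero_sub, neg_zero]
  · have hsplit : ∑ i, f i = f k + ∑ i ∈ Finset.univ.erase k, f i :=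
      (Finset.add_sum_erase _ f (Finset.mem_univ k)).symm
    have hesplit : (1 : A) = e + ∑ i ∈ Finset.univ.erase k, e₀ i := by
      rw [← hsum, ← Finset.add_sum_erase _ e₀ (Finset.mem_univ k)]
    have hrest : ∑ i ∈ Finset.univ.erase k, e₀ i = 1 - e := by
      rw [hesplit]; abel
    have hrg : ∑ i ∈ Finset.univ.erase k, e₀ i * g = g - e := by
      rw [← Finset.sum_mul, hrest, sub_mul, one_mul, heg]
    rw [hsplit]
    have hfk : f k = (1 - t) • e + t • g := by rw [hf]; simp
    have hfr : ∀ i ∈ Finset.univ.erase k, f i = e₀ i - t • (e₀ i * g) := by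
      intro i hi
      rw [hf]
      simp [Finset.ne_of_mem_erase hi]
    rw [Finset.sum_congr rfl hfr, Finset.sum_sub_distrib, ← Finset.smul_sum, hrg, hrest, hfk]
    module
end
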